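/- arXiv:2408.01763 — 2 statements merged into one kernel-verified Lean document; each statement's English description precedes it below -/
import Mathlib

section
/- The Jordan–Kronecker function satisfies f(a,b) = f(b,a) for all a, b in the region of convergence. -/
/-!
Expanding each summand of `f(a,b)` as a geometric series, in `b qⁿ` for `n ≥ 0` and in
`b⁻¹ q⁻ⁿ` for `n < 0`, gives
`f(a,b) = Σ_{m,n ≥ 0} aᵐ bⁿ q^{mn} - q/(ab) · Σ_{m,n ≥ 0} (q/a)ᵐ (q/b)ⁿ q^{mn}`.
Both double series converge absolutely in the given region, and swapping the two summation
indices shows that each is symmetric in `a` and `b`.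
-/

open Complex Filter Topology

/-- The q-Pochhammer symbol `(x; q)_∞ = ∏_{i ≥ 0} (1 - x qⁱ)`. -/
noncomputable def qPoch (q x : ℂ) : ℂ := ∏' i : ℕ, (1 - x * q ^ i)

/-- The Jordan–Kronecker function `f(a,b) = Σ_{n ∈ ℤ} aⁿ / (1 - b qⁿ)`. -/
noncomputable def jk (q a b : ℂ) : ℂ := ∑' n : ℤ, a ^ n / (1 - b * q ^ n)

/-- The Lambert series sum
`l(x) = Σ_{r ≥ 0} x qʳ/(1 - x qʳ) - Σ_{r ≥ 1} x⁻¹ qʳ/(1 - x⁻¹ qʳ)`. -/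
noncomputable def lam (q x : ℂ) : ℂ :=
  (∑' r : ℕ, x * q ^ r / (1 - x * q ^ r))
    - ∑' r : ℕ, x⁻¹ * q ^ (r + 1) / (1 - x⁻¹ * q ^ (r + 1))

section

variable {𝕜 : Type*} [NormedField 𝕜]

def jkTerm (q a b : 𝕜) (p : ℕ × ℕ) : 𝕜 := a ^ p.1 * b ^ p.2 * q ^ (p.1 * p.2)

lemma jkTerm_swap (q a b : 𝕜) (p : ℕ × ℕ) : jkTerm q a b p.swap = jkTerm q b a p := by
  simp only [jkTerm, Prod.fst_swap, Prod.snd_swap, Nat.mul_comm p.2]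
  ring

lemma tsum_jkTerm_comm (q a b : 𝕜) : ∑' p, jkTerm q a b p = ∑' p, jkTerm q b a p :=
  ((Equiv.prodComm ℕ ℕ).tsum_eq _).symm.trans (tsum_congr (jkTerm_swap q a b))

lemma summable_jkTerm [CompleteSpace 𝕜] {q a b : 𝕜} (hq : ‖q‖ ≤ 1) (ha : ‖a‖ < 1)
    (hb : ‖b‖ < 1) : Summable (jkTerm q a b) := by
  have hgeom : Summable fun p : ℕ × ℕ ↦ ‖a‖ ^ p.1 * ‖b‖ ^ p.2 :=
    (summable_geometric_of_lt_one (norm_nonneg a) ha).mul_of_nonneg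
      (summable_geometric_of_lt_one (norm_nonneg b) hb) (fun _ ↦ by positivity)
      fun _ ↦ by positivity
  refine .of_norm_bounded hgeom fun p ↦ ?_
  rw [jkTerm, norm_mul, norm_mul, norm_pow, norm_pow, norm_pow]
  exact mul_le_of_le_one_right (by positivity) (pow_le_one₀ (norm_nonneg q) hq)

lemma hasSum_jkTerm_row (q a b : 𝕜) (n : ℕ) (h : ‖b * q ^ n‖ < 1) :
    HasSum (fun m ↦ jkTerm q a b (n, m)) (a ^ n / (1 - b * q ^ n)) := by
  have hterm : (fun m ↦ jkTerm q a b (n, m)) = fun m ↦ a ^ n * (b * q ^ n) ^ m := by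
    ext m
    simp only [jkTerm, mul_pow, ← pow_mul]
    ring
  rw [hterm, div_eq_mul_inv]
  exact (hasSum_geometric_of_norm_lt_one h).mul_left (a ^ n)

lemma zpow_neg_succ_div_one_sub {q b : 𝕜} (a : 𝕜) (k : ℕ) (hq : q ≠ 0) (hb : b ≠ 0)
    (h : q / b * q ^ k ≠ 1) :
    a ^ (-(k + 1 : ℤ)) / (1 - b * q ^ (-(k + 1 : ℤ))) =
      -(q / (a * b) * ((q / a) ^ k / (1 - q / b * q ^ k))) := by
  have hden : q ^ (k + 1) - b ≠ 0 := by
    rintro hb'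
    apply h
    rw [← sub_eq_zero.1 hb']
    field_simp
    ring
  rw [show (-(k + 1 : ℤ)) = -((k + 1 : ℕ) : ℤ) by push_cast; ring, zpow_neg, zpow_neg,
    zpow_natCast, zpow_natCast]
  rcases eq_or_ne a 0 with rfl | ha
  · simp
  have hden' : b - q * q ^ k ≠ 0 := by
    rw [← pow_succ', ← neg_sub]
    exact neg_ne_zero.2 hden
  rw [div_pow]
  field_simp
  ring

end

lemma jk_eq_tsum_jkTerm_sub {q a b : ℂ} (hq : 0 < ‖q‖) (haq : ‖q‖ < ‖a‖) (ha : ‖a‖ < 1)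
    (hbq : ‖q‖ < ‖b‖) (hb : ‖b‖ < 1) :
    jk q a b = ∑' p, jkTerm q a b p - q / (a * b) * ∑' p, jkTerm q (q / a) (q / b) p := by
  have hq1 : ‖q‖ ≤ 1 := (haq.trans ha).le
  have hb0 : b ≠ 0 := norm_pos_iff.1 (hq.trans hbq)
  have hqa : ‖q / a‖ < 1 := by rw [norm_div]; exact (div_lt_one (hq.trans haq)).2 haq
  have hqb : ‖q / b‖ < 1 := by rw [norm_div]; exact (div_lt_one (hq.trans hbq)).2 hbq
  have hrow {c : ℂ} (hc : ‖c‖ < 1) (n : ℕ) : ‖c * q ^ n‖ < 1 := by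
    rw [norm_mul, norm_pow]
    exact (mul_le_of_le_one_right (norm_nonneg c) (pow_le_one₀ (norm_nonneg q) hq1)).trans_lt hc
  have hnonneg : HasSum (fun n : ℕ ↦ a ^ (n : ℤ) / (1 - b * q ^ (n : ℤ)))
      (∑' p, jkTerm q a b p) := by
    simp only [zpow_natCast]
    exact (summable_jkTerm hq1 ha hb).hasSum.prod_fiberwise
      fun n ↦ hasSum_jkTerm_row q a b n (hrow hb n)
  have hneg : HasSum (fun k : ℕ ↦ a ^ (-(k + 1 : ℤ)) / (1 - b * q ^ (-(k + 1 : ℤ))))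
      (-(q / (a * b) * ∑' p, jkTerm q (q / a) (q / b) p)) := by
    have hne k : q / b * q ^ k ≠ 1 := fun h1 ↦ (hrow hqb k).ne (by rw [h1, norm_one])
    simp only [zpow_neg_succ_div_one_sub a _ (norm_pos_iff.1 hq) hb0 (hne _)]
    exact ((summable_jkTerm hq1 hqa hqb).hasSum.mul_left _).neg.prod_fiberwise
      fun k ↦ ((hasSum_jkTerm_row q (q / a) (q / b) k (hrow hqb k)).mul_left _).neg
  have hsum : HasSum (fun n : ℤ ↦ a ^ n / (1 - b * q ^ n)) _ :=
    hnonneg.of_nat_of_neg_add_one hneg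
  rw [jk, hsum.tsum_eq, sub_eq_add_neg]

theorem jk_symm_general (q a b : ℂ) (hq0 : 0 < ‖q‖)
    (haq : ‖q‖ < ‖a‖) (ha1 : ‖a‖ < 1)
    (hbq : ‖q‖ < ‖b‖) (hb1 : ‖b‖ < 1) :
    jk q a b = jk q b a := by
  rw [jk_eq_tsum_jkTerm_sub hq0 haq ha1 hbq hb1, jk_eq_tsum_jkTerm_sub hq0 hbq hb1 haq ha1,
    tsum_jkTerm_comm q a b, tsum_jkTerm_comm q (q / a), mul_comm a b]

theorem jk_symm (q a b : ℂ) (hq0 : 0 < ‖q‖) (hq1 : ‖q‖ < 1)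
    (haq : ‖q‖ < ‖a‖) (ha1 : ‖a‖ < 1)
    (hbq : ‖q‖ < ‖b‖) (hb1 : ‖b‖ < 1)
    (ha : ∀ n : ℤ, a ≠ q ^ n) (hb : ∀ n : ℤ, b ≠ q ^ n) :
    jk q a b = jk q b a :=
  jk_symm_general q a b hq0 haq ha1 hbq hb1
end

section
/- The limit as a → 1 of (f(a,b) − 1/(1−a)) equals l(b) := Σ_{n≥0} bq^n/(1−bq^n) − Σ_{n≥1} b^{-1}q^n/(1−b^{-1}q^n). -/
/-!
For `‖q‖ < ‖a‖ < 1`, writing `1/(1 - x) = 1 + x/(1 - x)` in the terms `n ≥ 0` and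
`1/(1 - b q⁻ᵐ) = -(b⁻¹qᵐ)/(1 - b⁻¹qᵐ)` in the terms `n = -m < 0` gives
`f(a,b) - 1/(1 - a) = Σ_{k ≥ 0} cₖ aᵏ - Σ_{m ≥ 1} dₘ a⁻ᵐ` with Lambert coefficients
`cₖ = b qᵏ/(1 - b qᵏ)` and `dₘ = b⁻¹qᵐ/(1 - b⁻¹qᵐ)`, both `O(|q|ᵏ)`. Both power series therefore
converge on a disc of radius `1/|q| > 1`, so they are continuous at `a = 1`, where their
difference is `l(b)`.
-/

open Complex Filter Topology

open Asymptotics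

section PowerSeries

variable {𝕜 : Type*} [NormedField 𝕜] {c : ℕ → 𝕜} {q : 𝕜}

theorem summable_norm_mul_pow_of_isBigO (hc : c =O[atTop] (q ^ ·)) {R : ℝ} (hR0 : 0 ≤ R)
    (hR : R * ‖q‖ < 1) : Summable fun k => ‖c k‖ * R ^ k := by
  refine summable_of_isBigO_nat (summable_geometric_of_lt_one (by positivity) hR) ?_
  refine (hc.norm_norm.mul (isBigO_refl (fun k => R ^ k) atTop)).congr_right fun k => ?_
  rw [norm_pow, mul_pow, mul_comm]

variable [CompleteSpace 𝕜]

theorem summable_mul_pow_of_isBigO (hc : c =O[atTop] (q ^ ·)) {z : 𝕜} (hz : ‖z‖ * ‖q‖ < 1) :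
    Summable fun k => c k * z ^ k :=
  .of_norm <| by
    simpa only [norm_mul, norm_pow] using summable_norm_mul_pow_of_isBigO hc (norm_nonneg z) hz

theorem continuousOn_tsum_mul_pow_of_isBigO (hc : c =O[atTop] (q ^ ·)) {R : ℝ} (hR0 : 0 ≤ R)
    (hR : R * ‖q‖ < 1) : ContinuousOn (fun z => ∑' k, c k * z ^ k) (Metric.closedBall 0 R) := by
  refine continuousOn_tsum (fun k => by fun_prop) (summable_norm_mul_pow_of_isBigO hc hR0 hR) ?_
  intro k z hz
  rw [norm_mul, norm_pow]
  gcongr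
  simpa using hz

theorem continuousAt_tsum_mul_pow_of_isBigO (hc : c =O[atTop] (q ^ ·)) {z : 𝕜}
    (hz : ‖z‖ * ‖q‖ < 1) : ContinuousAt (fun w => ∑' k, c k * w ^ k) z := by
  obtain ⟨R, hzR, hR⟩ : ∃ R, ‖z‖ < R ∧ R * ‖q‖ < 1 := by
    have h : ∀ᶠ R in 𝓝 ‖z‖, R * ‖q‖ < 1 :=
      (continuous_id.mul continuous_const).continuousAt.eventually_lt continuousAt_const hz
    exact ((h.filter_mono nhdsWithin_le_nhds).and
      (self_mem_nhdsWithin (s := Set.Ioi ‖z‖))).exists.imp fun R hR => ⟨hR.2, hR.1⟩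
  refine (continuousOn_tsum_mul_pow_of_isBigO hc ((norm_nonneg z).trans hzR.le) hR).continuousAt
    (Metric.closedBall_mem_nhds_of_mem ?_)
  simpa using hzR

end PowerSeries

noncomputable def lambertCoeff {K : Type*} [DivisionRing K] (q x : K) (k : ℕ) : K :=
  x * q ^ k / (1 - x * q ^ k)

theorem isBigO_lambertCoeff {𝕜 : Type*} [NormedField 𝕜] {q : 𝕜} (hq : ‖q‖ < 1) (x : 𝕜) :
    lambertCoeff q x =O[atTop] (q ^ ·) := by
  have hlim : Tendsto (fun k => x * q ^ k) atTop (𝓝 0) := by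
    simpa using (tendsto_pow_atTop_nhds_zero_of_norm_lt_one hq).const_mul x
  have hden : (fun k => (1 - x * q ^ k)⁻¹) =O[atTop] (fun _ => (1 : 𝕜)) := by
    refine Tendsto.isBigO_one 𝕜 (c := (1 - 0 : 𝕜)⁻¹) ?_
    exact (tendsto_const_nhds.sub hlim).inv₀ (by norm_num)
  unfold lambertCoeff
  simpa [div_eq_mul_inv] using (isBigO_const_mul_self x (q ^ ·) atTop).mul hden

theorem lam_eq_tsum_lambertCoeff (q x : ℂ) :
    lam q x = ∑' k, lambertCoeff q x k - ∑' k, lambertCoeff q (x⁻¹ * q) k := by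
  simp only [lam, lambertCoeff, pow_succ', mul_assoc]

theorem jk_term_natCast {q a b : ℂ} {k : ℕ} (hbq : b * q ^ k ≠ 1) :
    a ^ (k : ℤ) / (1 - b * q ^ (k : ℤ)) = a ^ k + lambertCoeff q b k * a ^ k := by
  have : 1 - b * q ^ k ≠ 0 := sub_ne_zero.mpr hbq.symm
  rw [zpow_natCast, zpow_natCast, lambertCoeff]
  field_simp
  ring

theorem jk_term_neg_succ {q a b : ℂ} {k : ℕ} (hq : q ≠ 0) (hb : b ≠ 0) (hbq : b ≠ q ^ (k + 1)) :
    a ^ (-((k : ℤ) + 1)) / (1 - b * q ^ (-((k : ℤ) + 1)))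
      = -(lambertCoeff q (b⁻¹ * q) k * a⁻¹ ^ (k + 1)) := by
  have hk : -((k : ℤ) + 1) = -((k + 1 : ℕ) : ℤ) := by push_cast; rfl
  rw [hk, zpow_neg, zpow_neg, zpow_natCast, zpow_natCast, lambertCoeff, mul_assoc, ← pow_succ',
    inv_pow]
  have hQ : q ^ (k + 1) ≠ 0 := pow_ne_zero _ hq
  generalize q ^ (k + 1) = Q at *
  generalize (a ^ (k + 1))⁻¹ = A
  have h1 : 1 - b * Q⁻¹ ≠ 0 := by
    rwa [sub_ne_zero, ne_comm, ← div_eq_mul_inv, ne_eq, div_eq_one_iff_eq hQ]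
  have h2 : 1 - b⁻¹ * Q ≠ 0 := by
    rwa [sub_ne_zero, ne_comm, ← div_eq_inv_mul, ne_eq, div_eq_one_iff_eq hb, eq_comm]
  field_simp
  ring

theorem jk_sub_one_div_one_sub_eq {q a b : ℂ} (hq : q ≠ 0) (hb0 : b ≠ 0)
    (hb : ∀ n : ℤ, b ≠ q ^ n) (hqa : ‖q‖ < ‖a‖) (ha : ‖a‖ < 1) :
    jk q a b - 1 / (1 - a) = ∑' k, lambertCoeff q b k * a ^ k
      - a⁻¹ * ∑' k, lambertCoeff q (b⁻¹ * q) k * a⁻¹ ^ k := by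
  have ha0 : 0 < ‖a‖ := (norm_nonneg q).trans_lt hqa
  have hq1 : ‖q‖ < 1 := hqa.trans ha
  have hsc : Summable fun k => lambertCoeff q b k * a ^ k :=
    summable_mul_pow_of_isBigO (isBigO_lambertCoeff hq1 b) (by nlinarith [norm_nonneg q])
  have hsd : Summable fun k => lambertCoeff q (b⁻¹ * q) k * a⁻¹ ^ k := by
    refine summable_mul_pow_of_isBigO (isBigO_lambertCoeff hq1 _) ?_
    rwa [norm_inv, inv_mul_lt_iff₀ ha0, mul_one]
  have hgeo : Summable (a ^ ·) := summable_geometric_of_norm_lt_one ha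
  have hnat (k : ℕ) := jk_term_natCast (a := a) (k := k) fun h =>
    hb (-k) (by rw [zpow_neg, zpow_natCast]; exact eq_inv_of_mul_eq_one_left h)
  have hneg (k : ℕ) := jk_term_neg_succ (a := a) (k := k) hq hb0 (by exact_mod_cast hb (k + 1))
  have hshift : ∑' k : ℕ, lambertCoeff q (b⁻¹ * q) k * a⁻¹ ^ (k + 1)
      = a⁻¹ * ∑' k, lambertCoeff q (b⁻¹ * q) k * a⁻¹ ^ k := by
    rw [← tsum_mul_left]
    exact tsum_congr fun k => by ring
  rw [jk, tsum_of_nat_of_neg_add_one ((hgeo.add hsc).congr fun k => (hnat k).symm)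
    (((hsd.mul_left a⁻¹).neg).congr fun k => by rw [hneg k]; ring),
    tsum_congr hnat, tsum_congr hneg, tsum_neg, hgeo.tsum_add hsc,
    tsum_geometric_of_norm_lt_one ha, hshift]
  ring

theorem jk_limit_at_one (q b : ℂ) (hq0 : 0 < ‖q‖) (hq1 : ‖q‖ < 1)
    (hb0 : b ≠ 0) (hb : ∀ n : ℤ, b ≠ q ^ n) :
    Tendsto (fun a : ℂ => jk q a b - 1 / (1 - a))
      (nhdsWithin 1 {a : ℂ | ‖q‖ < ‖a‖ ∧ ‖a‖ < 1})
      (nhds (lam q b)) := by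
  set F : ℂ → ℂ := fun z => ∑' k, lambertCoeff q b k * z ^ k
  set G : ℂ → ℂ := fun w => ∑' k, lambertCoeff q (b⁻¹ * q) k * w ^ k
  have hF : ContinuousAt F 1 :=
    continuousAt_tsum_mul_pow_of_isBigO (isBigO_lambertCoeff hq1 b) (by simpa using hq1)
  have hG : ContinuousAt G 1⁻¹ :=
    continuousAt_tsum_mul_pow_of_isBigO (isBigO_lambertCoeff hq1 _) (by simpa using hq1)
  have hlim : ContinuousAt (fun a => F a - a⁻¹ * G a⁻¹) 1 :=
    hF.sub ((continuousAt_inv₀ one_ne_zero).mul (hG.comp (continuousAt_inv₀ one_ne_zero)))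
  have hval : F 1 - 1⁻¹ * G 1⁻¹ = lam q b := by
    simp only [F, G, one_pow, mul_one, inv_one, one_mul, lam_eq_tsum_lambertCoeff]
  rw [← hval]
  refine (hlim.tendsto.mono_left nhdsWithin_le_nhds).congr' ?_
  filter_upwards [self_mem_nhdsWithin] with a ⟨hqa, ha⟩
  exact (jk_sub_one_div_one_sub_eq (norm_pos_iff.mp hq0) hb0 hb hqa ha).symm
end
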